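/- arXiv:2108.07725 — 10 statements merged into one kernel-verified Lean document; each statement's English description precedes it below -/
import Mathlib

section
/- For all real α, β with 0 < β ≤ α < π/2, the function F(α) := (π − 2β)·cos α − (π − 2α)·cos β is nonnegative, i.e., (π − 2α)/cos α ≤ (π − 2β)/cos β, with strict inequality when β < α. -/
open Real Set

/-!
With `t = π/2 - θ`, the derivative of `θ ↦ (π - 2θ)/cos θ` has the sign of
`t cos t - sin t`, which is negative for `0 < t < π` by `t < tan t` (and trivially once `cos t ≤ 0`).
The first claim is the second with denominators cleared.
-/

lemma mul_cos_lt_sin {t : ℝ} (h0 : 0 < t) (hπ : t < π) : t * cos t < sin t := by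
  have hsin : 0 < sin t := sin_pos_of_pos_of_lt_pi h0 hπ
  rcases lt_or_ge t (π / 2) with ht | ht
  · have hcos : 0 < cos t := cos_pos_of_mem_Ioo ⟨by linarith, ht⟩
    rw [← lt_div_iff₀ hcos, ← tan_eq_sin_div_cos]
    exact lt_tan h0 ht
  · have hcos : cos t ≤ 0 := cos_nonpos_of_pi_div_two_le_of_le ht (by linarith)
    nlinarith

lemma hasDerivAt_pi_sub_two_mul_div_cos {x : ℝ} (hx : cos x ≠ 0) :
    HasDerivAt (fun θ ↦ (π - 2 * θ) / cos θ)
      ((-2 * cos x + (π - 2 * x) * sin x) / cos x ^ 2) x := by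
  have hlin : HasDerivAt (fun θ : ℝ ↦ π - 2 * θ) (-2) x := by
    simpa using ((hasDerivAt_id x).const_mul (2 : ℝ)).const_sub π
  exact (hlin.div (hasDerivAt_cos x) hx).congr_deriv (by ring)

lemma strictAntiOn_pi_sub_two_mul_div_cos :
    StrictAntiOn (fun θ ↦ (π - 2 * θ) / cos θ) (Ioo (-(π / 2)) (π / 2)) := by
  have hcos : ∀ x ∈ Ioo (-(π / 2)) (π / 2), cos x ≠ 0 := fun x hx ↦ (cos_pos_of_mem_Ioo hx).ne'
  refine strictAntiOn_of_hasDerivWithinAt_neg (convex_Ioo _ _)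
    (fun x hx ↦ (hasDerivAt_pi_sub_two_mul_div_cos (hcos x hx)).continuousAt.continuousWithinAt)
    (fun x hx ↦ (hasDerivAt_pi_sub_two_mul_div_cos (hcos x (interior_subset hx))).hasDerivWithinAt)
    (fun x hx ↦ ?_)
  rw [interior_Ioo] at hx
  have key : (π / 2 - x) * sin x < cos x := by
    simpa only [cos_pi_div_two_sub, sin_pi_div_two_sub] using
      mul_cos_lt_sin (t := π / 2 - x) (by linarith [hx.2]) (by linarith [hx.1])
  exact div_neg_of_neg_of_pos (by linarith) (pow_pos (cos_pos_of_mem_Ioo hx) 2)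

theorem bulging_monotone (α β : ℝ) (h0 : 0 < β) (hba : β ≤ α) (ha : α < π / 2) :
    (π - 2 * β) * Real.cos α - (π - 2 * α) * Real.cos β ≥ 0 ∧
    (π - 2 * α) / Real.cos α ≤ (π - 2 * β) / Real.cos β ∧
    (β < α → (π - 2 * α) / Real.cos α < (π - 2 * β) / Real.cos β) := by
  have hβ : β ∈ Ioo (-(π / 2)) (π / 2) := ⟨by linarith [pi_pos], by linarith⟩
  have hα : α ∈ Ioo (-(π / 2)) (π / 2) := ⟨by linarith [hβ.1], ha⟩
  have hle : (π - 2 * α) / cos α ≤ (π - 2 * β) / cos β :=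
    strictAntiOn_pi_sub_two_mul_div_cos.antitoneOn hβ hα hba
  have hcross : (π - 2 * α) * cos β ≤ (π - 2 * β) * cos α :=
    (div_le_div_iff₀ (cos_pos_of_mem_Ioo hα) (cos_pos_of_mem_Ioo hβ)).mp hle
  exact ⟨sub_nonneg.mpr hcross, hle, strictAntiOn_pi_sub_two_mul_div_cos hβ hα⟩
end

section
/- The function f(x) = x / sin x is strictly monotone increasing on the interval [π/4, π/2), and satisfies f(x) < π/2 for all x in [π/4, π/2). -/
open Real

lemma sin_pos_aux {x : ℝ} (hx1 : π / 4 ≤ x) (hx2 : x ≤ π / 2) : 0 < Real.sin x := by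
  have hπ := Real.pi_pos
  exact Real.sin_pos_of_pos_of_lt_pi (by linarith) (by linarith)

lemma strictMonoOn_aux :
    StrictMonoOn (fun x : ℝ => x / Real.sin x) (Set.Icc (π / 4) (π / 2)) := by
  have hπ := Real.pi_pos
  apply strictMonoOn_of_deriv_pos (convex_Icc _ _)
  · apply ContinuousOn.div continuousOn_id Real.continuousOn_sin
    intro x hx
    exact (sin_pos_aux hx.1 hx.2).ne'
  · intro x hx
    rw [interior_Icc] at hx
    obtain ⟨h1, h2⟩ := hx
    have hs : 0 < Real.sin x := sin_pos_aux h1.le h2.le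
    have hc : 0 < Real.cos x := Real.cos_pos_of_mem_Ioo ⟨by linarith, h2⟩
    have hd : HasDerivAt (fun x : ℝ => x / Real.sin x)
        ((1 * Real.sin x - x * Real.cos x) / Real.sin x ^ 2) x :=
      (hasDerivAt_id x).div (Real.hasDerivAt_sin x) hs.ne'
    rw [hd.deriv]
    have htan : x < Real.tan x := Real.lt_tan (by linarith) h2
    rw [Real.tan_eq_sin_div_cos] at htan
    have : x * Real.cos x < Real.sin x := by
      calc x * Real.cos x < (Real.sin x / Real.cos x) * Real.cos x := by
            exact mul_lt_mul_of_pos_right htan hc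
        _ = Real.sin x := by field_simp
    have h2s : 0 < Real.sin x ^ 2 := by positivity
    apply div_pos (by linarith) h2s

theorem x_div_sin_strictMono_and_lt :
    StrictMonoOn (fun x : ℝ => x / Real.sin x) (Set.Ico (π / 4) (π / 2)) ∧
    ∀ x ∈ Set.Ico (π / 4) (π / 2), x / Real.sin x < π / 2 := by
  have hπ := Real.pi_pos
  constructor
  · exact strictMonoOn_aux.mono (Set.Ico_subset_Icc_self)
  · intro x hx
    have hmem : x ∈ Set.Icc (π / 4) (π / 2) := ⟨hx.1, hx.2.le⟩
    have hend : (π / 2) ∈ Set.Icc (π / 4) (π / 2) := ⟨by linarith, le_refl _⟩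
    have := strictMonoOn_aux hmem hend hx.2
    simpa [Real.sin_pi_div_two] using this
end

section
/- For all positive reals a, b with a ≤ b, we have (√(a² + b²)/b) · arctan(b/a) < π/2. -/
open Real

theorem key_arctan_ineq (a b : ℝ) (ha : 0 < a) (hb : 0 < b) (hab : a ≤ b) :
    Real.sqrt (a ^ 2 + b ^ 2) / b * Real.arctan (b / a) < π / 2 := by
  set θ := Real.arctan (b / a) with hθdef
  have hθpos : 0 < θ := by
    rw [hθdef, ← Real.arctan_zero]
    exact Real.arctan_strictMono (by positivity)
  have hθlt : θ < π / 2 := Real.arctan_lt_pi_div_two _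
  have hS : 0 < Real.sqrt (a ^ 2 + b ^ 2) := Real.sqrt_pos.mpr (by positivity)
  have hsin : Real.sin θ = b / Real.sqrt (a ^ 2 + b ^ 2) := by
    rw [hθdef, Real.sin_arctan]
    have h1 : 1 + (b / a) ^ 2 = (a ^ 2 + b ^ 2) / a ^ 2 := by field_simp
    rw [h1, Real.sqrt_div (by positivity), Real.sqrt_sq ha.le]
    field_simp
  have hπ : 0 < π := Real.pi_pos
  have hjordan : 2 / π * θ < Real.sin θ := Real.mul_lt_sin hθpos hθlt
  rw [hsin] at hjordan
  rw [div_mul_eq_mul_div, div_lt_iff₀ hb]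
  have h2 : Real.sqrt (a^2+b^2) * (2 / π * θ) < Real.sqrt (a^2+b^2) * (b / Real.sqrt (a^2+b^2)) :=
    (mul_lt_mul_iff_right₀ hS).mpr hjordan
  rw [mul_div_cancel₀ _ (ne_of_gt hS)] at h2
  have h3 : Real.sqrt (a^2+b^2) * (2 / π * θ) = 2/π * (Real.sqrt (a^2+b^2) * θ) := by ring
  rw [h3] at h2
  calc Real.sqrt (a^2+b^2) * θ = π/2 * (2/π * (Real.sqrt (a^2+b^2) * θ)) := by
        field_simp
      _ < π/2 * b := by
        exact (mul_lt_mul_iff_right₀ (by linarith)).mpr h2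
end

section
/- Let a, b be positive reals with a ≤ b, let t = arctan(b/a), and define F(t) = ((b² − a²)/b²)·t² − π·t + π²/4. Then F(t) ≥ 0 if t ∈ [π/4, πb/(2(a+b))] and F(t) < 0 if t ∈ (πb/(2(a+b)), π/2). -/
open Real

theorem bulging_pythagoras_sign (a b : ℝ) (ha : 0 < a) (hab : a ≤ b) :
    (Real.arctan (b / a) ∈ Set.Icc (π / 4) (π * b / (2 * (a + b))) →
      (b ^ 2 - a ^ 2) / b ^ 2 * Real.arctan (b / a) ^ 2 - π * Real.arctan (b / a) + π ^ 2 / 4 ≥ 0) ∧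
    (Real.arctan (b / a) ∈ Set.Ioo (π * b / (2 * (a + b))) (π / 2) →
      (b ^ 2 - a ^ 2) / b ^ 2 * Real.arctan (b / a) ^ 2 - π * Real.arctan (b / a) + π ^ 2 / 4 < 0) := by
  have hb : 0 < b := lt_of_lt_of_le ha hab
  set t := Real.arctan (b / a) with ht
  have htlt : t < π / 2 := Real.arctan_lt_pi_div_two _
  have hab' : (0:ℝ) < a + b := by linarith
  have hfac : (b ^ 2 - a ^ 2) / b ^ 2 * t ^ 2 - π * t + π ^ 2 / 4
      = (t - π * b / (2 * (a + b))) * ((b ^ 2 - a ^ 2) / b ^ 2 * t - π * (a + b) / (2 * b)) := by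
    field_simp
    ring
  have hc : 0 ≤ (b ^ 2 - a ^ 2) / b ^ 2 := by
    apply div_nonneg (by nlinarith) (by positivity)
  have hg : (b ^ 2 - a ^ 2) / b ^ 2 * t - π * (a + b) / (2 * b) < 0 := by
    have h1 : (b ^ 2 - a ^ 2) / b ^ 2 * t ≤ (b ^ 2 - a ^ 2) / b ^ 2 * (π / 2) :=
      mul_le_mul_of_nonneg_left htlt.le hc
    have h2 : (b ^ 2 - a ^ 2) / b ^ 2 * (π / 2) < π * (a + b) / (2 * b) := by
      rw [div_mul_eq_mul_div, div_lt_div_iff₀ (by positivity) (by positivity)]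
      have hpi : (0:ℝ) < π := Real.pi_pos
      nlinarith [mul_pos (mul_pos Real.pi_pos hb) (mul_pos ha hab')]
    linarith
  constructor
  · rintro ⟨h1, h2⟩
    rw [hfac]
    nlinarith [mul_nonneg (by linarith : (0:ℝ) ≤ π * b / (2 * (a + b)) - t) (by linarith : (0:ℝ) ≤ -((b ^ 2 - a ^ 2) / b ^ 2 * t - π * (a + b) / (2 * b)))]
  · rintro ⟨h1, h2⟩
    rw [hfac]
    exact mul_neg_of_pos_of_neg (by linarith) hg
end

section
/- For an isosceles right triangle with legs of length a > 0, the bulging-triangle edge lengths satisfy |AB~|² = |BC~|² + |CA~|² = π²a²/4, i.e., the Pythagorean theorem holds exactly. -/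
open Real

lemma arctan_div_self {a : ℝ} (ha : a ≠ 0) : arctan (a / a) = π / 4 := by
  rw [div_self ha, arctan_one]

lemma sq_add_sq_self_div_mul_pi_div_four {a : ℝ} (ha : a ≠ 0) :
    (a ^ 2 + a ^ 2) / a * (π / 4) = π * a / 2 := by
  field_simp
  ring

lemma sq_sqrt_sq_add_sq_self_mul_pi_div_four (a : ℝ) :
    (√(a ^ 2 + a ^ 2) * (π / 4)) ^ 2 = π ^ 2 * a ^ 2 / 8 := by
  rw [mul_pow, sq_sqrt (by positivity)]
  ring

theorem isosceles_bulging_pythagoras (a : ℝ) (ha : 0 < a) :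
    ((a ^ 2 + a ^ 2) / a * Real.arctan (a / a)) ^ 2 =
      (Real.sqrt (a ^ 2 + a ^ 2) * (π / 2 - Real.arctan (a / a))) ^ 2 +
        (Real.sqrt (a ^ 2 + a ^ 2) * Real.arctan (a / a)) ^ 2 ∧
    ((a ^ 2 + a ^ 2) / a * Real.arctan (a / a)) ^ 2 = π ^ 2 * a ^ 2 / 4 := by
  have hθ : π / 2 - π / 4 = π / 4 := by ring
  rw [arctan_div_self ha.ne', hθ, sq_add_sq_self_div_mul_pi_div_four ha.ne',
    sq_sqrt_sq_add_sq_self_mul_pi_div_four]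
  constructor <;> ring
end

section
/- Let a, b be positive reals with a ≤ b. Then ((a²+b²)/b)·arctan(b/a) < √(a²+b²)·(π/2 − arctan(b/a)) + √(a²+b²)·arctan(b/a), i.e., |AB~| < |BC~| + |CA~| for a right-angled bulging triangle. -/
/-! The two legs `BC~` and `CA~` add up to `√(a² + b²) · π/2`, so with `θ = arctan (b/a)`,
for which `sin θ = b / √(a² + b²)`, the claim is `θ < π/2 · sin θ`: Jordan's inequality. -/

open Real

lemma lt_pi_div_two_mul_sin {x : ℝ} (hx₀ : 0 < x) (hx : x < π / 2) : x < π / 2 * sin x := by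
  have hjordan : 2 / π * x < sin x := mul_lt_sin hx₀ hx
  calc x = π / 2 * (2 / π * x) := by field_simp
    _ < π / 2 * sin x := by gcongr

lemma sin_arctan_div {a : ℝ} (ha : 0 < a) (b : ℝ) :
    sin (arctan (b / a)) = b / √(a ^ 2 + b ^ 2) := by
  rw [sin_arctan, show 1 + (b / a) ^ 2 = (a ^ 2 + b ^ 2) / a ^ 2 by field_simp,
    sqrt_div (by positivity), sqrt_sq ha.le]
  field_simp

lemma arctan_div_mul_sqrt_lt {a b : ℝ} (ha : 0 < a) (hb : 0 < b) :
    arctan (b / a) * √(a ^ 2 + b ^ 2) < π / 2 * b := by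
  have hr : 0 < √(a ^ 2 + b ^ 2) := by positivity
  have hθ := lt_pi_div_two_mul_sin (arctan_pos.2 (div_pos hb ha)) (arctan_lt_pi_div_two _)
  rwa [sin_arctan_div ha, ← mul_div_assoc, lt_div_iff₀ hr] at hθ

theorem right_bulging_triangle_ineq_general (a b : ℝ) (ha : 0 < a) (hb : 0 < b) :
    (a ^ 2 + b ^ 2) / b * Real.arctan (b / a) <
      Real.sqrt (a ^ 2 + b ^ 2) * (π / 2 - Real.arctan (b / a)) +
        Real.sqrt (a ^ 2 + b ^ 2) * Real.arctan (b / a) := by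
  have hr : 0 < √(a ^ 2 + b ^ 2) := by positivity
  have hsq : √(a ^ 2 + b ^ 2) ^ 2 = a ^ 2 + b ^ 2 := sq_sqrt (by positivity)
  calc (a ^ 2 + b ^ 2) / b * arctan (b / a)
      = √(a ^ 2 + b ^ 2) * (arctan (b / a) * √(a ^ 2 + b ^ 2)) / b := by nth_rw 1 [← hsq]; ring
    _ < √(a ^ 2 + b ^ 2) * (π / 2 * b) / b :=
      div_lt_div_of_pos_right (mul_lt_mul_of_pos_left (arctan_div_mul_sqrt_lt ha hb) hr) hb
    _ = √(a ^ 2 + b ^ 2) * (π / 2 - arctan (b / a)) + √(a ^ 2 + b ^ 2) * arctan (b / a) := by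
      field_simp; ring

theorem right_bulging_triangle_ineq (a b : ℝ) (ha : 0 < a) (hb : 0 < b) (hab : a ≤ b) :
    (a ^ 2 + b ^ 2) / b * Real.arctan (b / a) <
      Real.sqrt (a ^ 2 + b ^ 2) * (π / 2 - Real.arctan (b / a)) +
        Real.sqrt (a ^ 2 + b ^ 2) * Real.arctan (b / a) :=
  right_bulging_triangle_ineq_general a b ha hb
end

section
/- For a right triangle with right angle at C, legs |BC| = a, |CA| = √3·a, hypotenuse |AB| = 2a (so angle ABC = π/3), the bulging triangle edge lengths are |AB~| = 4√3πa/9, |BC~| = πa/3, |CA~| = 2πa/3; in particular |AB~| : |BC~| : |CA~| = 4 : √3 : 2√3. -/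
open Real

theorem bulging_30_60_90 (a : ℝ) (ha : 0 < a) :
    (a ^ 2 + (Real.sqrt 3 * a) ^ 2) / (Real.sqrt 3 * a) * Real.arctan (Real.sqrt 3 * a / a) =
      4 * Real.sqrt 3 * π * a / 9 ∧
    Real.sqrt (a ^ 2 + (Real.sqrt 3 * a) ^ 2) * (π / 2 - Real.arctan (Real.sqrt 3 * a / a)) =
      π * a / 3 ∧
    Real.sqrt (a ^ 2 + (Real.sqrt 3 * a) ^ 2) * Real.arctan (Real.sqrt 3 * a / a) =
      2 * π * a / 3 ∧
    ∃ k : ℝ, 0 < k ∧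
      (a ^ 2 + (Real.sqrt 3 * a) ^ 2) / (Real.sqrt 3 * a) * Real.arctan (Real.sqrt 3 * a / a)
        = 4 * k ∧
      Real.sqrt (a ^ 2 + (Real.sqrt 3 * a) ^ 2) * (π / 2 - Real.arctan (Real.sqrt 3 * a / a))
        = Real.sqrt 3 * k ∧
      Real.sqrt (a ^ 2 + (Real.sqrt 3 * a) ^ 2) * Real.arctan (Real.sqrt 3 * a / a)
        = 2 * Real.sqrt 3 * k := by
  have hs3 : (Real.sqrt 3) ^ 2 = 3 := Real.sq_sqrt (by norm_num)
  have hs3pos : (0:ℝ) < Real.sqrt 3 := Real.sqrt_pos.mpr (by norm_num)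
  have hdiv : Real.sqrt 3 * a / a = Real.sqrt 3 := by
    field_simp
  have harctan : Real.arctan (Real.sqrt 3 * a / a) = π / 3 := by
    rw [hdiv]
    exact Real.arctan_eq_of_tan_eq Real.tan_pi_div_three
      ⟨by linarith [pi_pos], by linarith [pi_pos]⟩
  have hsum : a ^ 2 + (Real.sqrt 3 * a) ^ 2 = 4 * a ^ 2 := by
    rw [mul_pow, hs3]; ring
  have hsqrt : Real.sqrt (a ^ 2 + (Real.sqrt 3 * a) ^ 2) = 2 * a := by
    rw [hsum, show 4 * a ^ 2 = (2*a)^2 by ring, Real.sqrt_sq (by positivity)]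
  have h1 : (a ^ 2 + (Real.sqrt 3 * a) ^ 2) / (Real.sqrt 3 * a) * Real.arctan (Real.sqrt 3 * a / a)
      = 4 * Real.sqrt 3 * π * a / 9 := by
    rw [harctan, hsum]; field_simp; nlinarith [hs3, pi_pos, ha]
  have h2 : Real.sqrt (a ^ 2 + (Real.sqrt 3 * a) ^ 2) * (π / 2 - Real.arctan (Real.sqrt 3 * a / a))
      = π * a / 3 := by rw [harctan, hsqrt]; ring
  have h3 : Real.sqrt (a ^ 2 + (Real.sqrt 3 * a) ^ 2) * Real.arctan (Real.sqrt 3 * a / a)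
      = 2 * π * a / 3 := by rw [harctan, hsqrt]; ring
  refine ⟨h1, h2, h3, Real.sqrt 3 * π * a / 9, by positivity, by rw [h1]; ring,
    by rw [h2]; nlinarith [hs3, pi_pos], by rw [h3]; nlinarith [hs3, pi_pos]⟩
end

section
/- Let α, β, γ be the angles of a triangle at A, B, C respectively, with side lengths a = |BC|, b = |CA|, c = |AB|, and suppose 0 < β < γ ≤ π/2. If additionally β ≤ α, then b·(π − 2α)/(2 cos α) < c·(π − 2β)/(2 cos β). -/
open Real

lemma aux_concave_sin (u v : ℝ) (hu : 0 < u) (huv : u ≤ v) (hv : v ≤ π) :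
    u * Real.sin v ≤ v * Real.sin u := by
  have hv0 : 0 < v := lt_of_lt_of_le hu huv
  have h0 : (0:ℝ) ∈ Set.Icc 0 π := by constructor <;> [rfl; positivity]
  have hvmem : v ∈ Set.Icc (0:ℝ) π := ⟨le_of_lt hv0, hv⟩
  have h1 : (0:ℝ) ≤ 1 - u / v := by
    rw [sub_nonneg]; exact div_le_one_of_le₀ huv (le_of_lt hv0)
  have h2 : (0:ℝ) ≤ u / v := by positivity
  have h3 : (1 - u / v) + u / v = 1 := by ring
  have key := strictConcaveOn_sin_Icc.concaveOn.2 h0 hvmem h1 h2 h3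
  simp only [smul_eq_mul, mul_zero, Real.sin_zero, zero_add] at key
  have huv' : u / v * v = u := div_mul_cancel₀ u (ne_of_gt hv0)
  rw [huv'] at key
  have := mul_le_mul_of_nonneg_left key (le_of_lt hv0)
  calc u * Real.sin v = v * (u / v * Real.sin v) := by field_simp
    _ ≤ v * Real.sin u := this

theorem bulging_edge_comparison (α β γ a b c R : ℝ)
    (hα : 0 < α) (hβ : 0 < β) (hγ : 0 < γ) (hsum : α + β + γ = π)
    (hβγ : β < γ) (hγ2 : γ ≤ π / 2) (hβα : β ≤ α) (hR : 0 < R)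
    (hA : a = 2 * R * Real.sin α) (hB : b = 2 * R * Real.sin β) (hC : c = 2 * R * Real.sin γ) :
    b * (π - 2 * α) / (2 * Real.cos α) < c * (π - 2 * β) / (2 * Real.cos β) := by
  have hπ := Real.pi_pos
  have hβπ : β < π / 2 := lt_of_lt_of_le hβγ hγ2
  obtain ⟨u, hu⟩ : ∃ u, u = π / 2 - α := ⟨_, rfl⟩
  obtain ⟨v, hv⟩ : ∃ v, v = π / 2 - β := ⟨_, rfl⟩
  have hv0 : 0 < v := by rw [hv]; linarith
  have hvlt : v < π / 2 := by rw [hv]; linarith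
  have hsinv : 0 < Real.sin v := Real.sin_pos_of_pos_of_lt_pi hv0 (by linarith)
  have hsinβ : 0 < Real.sin β := Real.sin_pos_of_pos_of_lt_pi hβ (by linarith)
  have hsinγ : 0 < Real.sin γ := Real.sin_pos_of_pos_of_lt_pi hγ (by linarith)
  have hβγsin : Real.sin β < Real.sin γ :=
    Real.sin_lt_sin_of_lt_of_le_pi_div_two (by linarith) hγ2 hβγ
  have hcosβ : Real.cos β = Real.sin v := by rw [hv]; exact (Real.sin_pi_div_two_sub β).symm
  have hcosα : Real.cos α = Real.sin u := by rw [hu]; exact (Real.sin_pi_div_two_sub α).symm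
  have hLHS : b * (π - 2 * α) / (2 * Real.cos α) = 2 * R * Real.sin β * (u / Real.sin u) := by
    rw [hB, hcosα]
    have h2u : π - 2 * α = 2 * u := by rw [hu]; ring
    rw [h2u]
    by_cases h : Real.sin u = 0
    · simp [h]
    · field_simp
  have hRHS : c * (π - 2 * β) / (2 * Real.cos β) = 2 * R * Real.sin γ * (v / Real.sin v) := by
    rw [hC, hcosβ]
    have h2v : π - 2 * β = 2 * v := by rw [hv]; ring
    rw [h2v]
    field_simp
  rw [hLHS, hRHS]
  have hvq : 0 < v / Real.sin v := by positivity
  by_cases hu0 : u = 0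
  · rw [hu0]
    simp only [zero_div, mul_zero]
    positivity
  · have huabs : |u| ≤ v := by
      rw [abs_le]
      constructor
      · rw [hu, hv]; linarith
      · rw [hu, hv]; linarith
    have habs0 : 0 < |u| := abs_pos.2 hu0
    have hsinuabs : 0 < Real.sin |u| :=
      Real.sin_pos_of_pos_of_lt_pi habs0 (by linarith)
    have heq : u / Real.sin u = |u| / Real.sin |u| := by
      rcases abs_cases u with ⟨h1, h2⟩ | ⟨h1, h2⟩ <;> rw [h1]
      rw [Real.sin_neg, neg_div_neg_eq]
    have key : |u| * Real.sin v ≤ v * Real.sin |u| :=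
      aux_concave_sin |u| v habs0 huabs (by linarith)
    have hq : |u| / Real.sin |u| ≤ v / Real.sin v :=
      (div_le_div_iff₀ hsinuabs hsinv).2 key
    rw [heq]
    have hq0 : 0 < |u| / Real.sin |u| := by positivity
    have := mul_lt_mul hβγsin hq hq0 (le_of_lt hsinγ)
    have h2R : (0:ℝ) < 2 * R := by linarith
    calc 2 * R * Real.sin β * (|u| / Real.sin |u|)
        = 2 * R * (Real.sin β * (|u| / Real.sin |u|)) := by ring
      _ < 2 * R * (Real.sin γ * (v / Real.sin v)) := by
          exact mul_lt_mul_of_pos_left this h2R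
      _ = 2 * R * Real.sin γ * (v / Real.sin v) := by ring
end

section
/- Let triangle ABC have angles α at A, β at B, γ at C, all in (0, π/2], with α ≤ β < γ. Then with a = |BC|, b = |CA|, c = |AB|, one has c(π − 2α)/(2 cos α) < a(π − 2β)/(2 cos β) + b(π − 2α)/(2 cos α). -/
open Real

-- Key monotonicity-type estimate: (π - 2α) * sin α ≤ 2 * cos α on (0, π/2).
lemma bulge_aux_A {α : ℝ} (h1 : 0 < α) (h2 : α < π / 2) :
    (π - 2 * α) * Real.sin α ≤ 2 * Real.cos α := by
  set t := π / 2 - α with ht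
  have ht1 : 0 < t := by simp [ht]; linarith
  have ht2 : t < π / 2 := by simp only [ht]; linarith
  have hcost : 0 < Real.cos t := Real.cos_pos_of_mem_Ioo ⟨by linarith, ht2⟩
  have htan := Real.lt_tan ht1 ht2
  rw [Real.tan_eq_sin_div_cos] at htan
  have hkey : t * Real.cos t ≤ Real.sin t := by
    rw [← le_div_iff₀ hcost] at *
    linarith
  have hs : Real.sin α = Real.cos t := by
    rw [ht, Real.cos_pi_div_two_sub]
  have hc : Real.cos α = Real.sin t := by
    rw [ht, Real.sin_pi_div_two_sub]
  have hpt : π - 2 * α = 2 * t := by rw [ht]; ring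
  rw [hs, hc, hpt]
  nlinarith [hkey]

-- (π - 2α) * cos β ^ 2 ≤ (π - 2β) * cos α  when 0 < α < π/2, π/2 - α ≤ β < π/2.
lemma bulge_aux_B {α β : ℝ} (h1 : 0 < α) (h2 : α < π / 2)
    (h3 : π / 2 - α ≤ β) (h4 : β < π / 2) :
    (π - 2 * α) * Real.cos β ^ 2 ≤ (π - 2 * β) * Real.cos α := by
  set x := π / 2 - β with hx
  have hx1 : 0 < x := by simp only [hx]; linarith
  have hx2 : x ≤ α := by simp only [hx]; linarith
  have hcb : Real.cos β = Real.sin x := by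
    rw [show β = π / 2 - x by simp [hx], Real.cos_pi_div_two_sub]
  have hpb : π - 2 * β = 2 * x := by rw [hx]; ring
  have hsx0 : 0 ≤ Real.sin x := Real.sin_nonneg_of_nonneg_of_le_pi (le_of_lt hx1)
    (by linarith [Real.pi_pos])
  have hsxx : Real.sin x ≤ x := Real.sin_le (le_of_lt hx1)
  have hsmono : Real.sin x ≤ Real.sin α := by
    rcases eq_or_lt_of_le hx2 with h | h
    · rw [h]
    · exact le_of_lt (Real.sin_lt_sin_of_lt_of_le_pi_div_two (by linarith) (le_of_lt h2) h)
  have hca : 0 ≤ Real.cos α := Real.cos_nonneg_of_mem_Icc ⟨by linarith, le_of_lt h2⟩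
  have hA := bulge_aux_A h1 h2
  have hpa : 0 < π - 2 * α := by linarith
  rw [hcb, hpb]
  nlinarith [mul_le_mul_of_nonneg_right hA hsx0, mul_le_mul_of_nonneg_left hsxx hca,
    mul_le_mul_of_nonneg_left hsmono (le_of_lt hpa), sq_nonneg (Real.sin x)]

theorem bulging_triangle_inequality (α β γ a b c R : ℝ)
    (hα : 0 < α) (hαβ : α ≤ β) (hβγ : β < γ) (hγ2 : γ ≤ π / 2)
    (hsum : α + β + γ = π) (hR : 0 < R)
    (hA : a = 2 * R * Real.sin α) (hB : b = 2 * R * Real.sin β) (hC : c = 2 * R * Real.sin γ) :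
    c * (π - 2 * α) / (2 * Real.cos α) <
      a * (π - 2 * β) / (2 * Real.cos β) + b * (π - 2 * α) / (2 * Real.cos α) := by
  have hα2 : α < π / 2 := lt_of_le_of_lt hαβ (lt_of_lt_of_le hβγ hγ2)
  have hβ2 : β < π / 2 := lt_of_lt_of_le hβγ hγ2
  have hβα : π / 2 - α ≤ β := by linarith
  have hca : 0 < Real.cos α := Real.cos_pos_of_mem_Ioo ⟨by linarith, hα2⟩
  have hcb : 0 < Real.cos β := Real.cos_pos_of_mem_Ioo ⟨by linarith, hβ2⟩
  have hsh : 0 < Real.sin (α / 2) :=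
    Real.sin_pos_of_pos_of_lt_pi (by linarith) (by linarith [Real.pi_pos])
  have hch : 0 ≤ Real.cos (α / 2) :=
    Real.cos_nonneg_of_mem_Icc ⟨by linarith, by linarith⟩
  have hsb : 0 < Real.sin β :=
    Real.sin_pos_of_pos_of_lt_pi (by linarith) (by linarith [Real.pi_pos])
  have hγeq : γ = π - (α + β) := by linarith
  -- sin γ = sin (α + β)
  have hsg : Real.sin γ = Real.sin (α + β) := by rw [hγeq, Real.sin_pi_sub]
  have hpy := Real.sin_sq_add_cos_sq (α / 2)
  -- sin (α+β) - sin β = 2 sin(α/2) cos(α/2 + β)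
  have h1 : Real.sin (α + β) - Real.sin β
      = 2 * Real.sin (α / 2) * Real.cos (α / 2 + β) := by
    rw [show α + β = α / 2 + (α / 2 + β) by ring, Real.sin_add, Real.cos_add, Real.sin_add]
    linear_combination Real.sin β * hpy
  -- sin α = 2 sin(α/2) cos(α/2)
  have h2 : Real.sin α = 2 * Real.sin (α / 2) * Real.cos (α / 2) := by
    have := Real.sin_two_mul (α / 2)
    rw [show 2 * (α / 2) = α by ring] at this
    exact this
  -- cos(α/2 + β) < cos(α/2) cos β
  have h3 : Real.cos (α / 2 + β) < Real.cos (α / 2) * Real.cos β := by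
    rw [Real.cos_add]
    nlinarith [mul_pos hsh hsb]
  have h4 := bulge_aux_B hα hα2 hβα hβ2
  have hpa : 0 < π - 2 * α := by linarith
  -- Key inequality
  have K : Real.sin γ * ((π - 2 * α) * Real.cos β) <
      Real.sin α * ((π - 2 * β) * Real.cos α) + Real.sin β * ((π - 2 * α) * Real.cos β) := by
    rw [hsg]
    have step1 : Real.cos (α / 2 + β) * ((π - 2 * α) * Real.cos β) <
        (Real.cos (α / 2) * Real.cos β) * ((π - 2 * α) * Real.cos β) := by
      apply mul_lt_mul_of_pos_right h3
      positivity
    have step2 : Real.cos (α / 2) * ((π - 2 * α) * Real.cos β ^ 2) ≤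
        Real.cos (α / 2) * ((π - 2 * β) * Real.cos α) :=
      mul_le_mul_of_nonneg_left h4 hch
    calc Real.sin (α + β) * ((π - 2 * α) * Real.cos β)
        = Real.sin β * ((π - 2 * α) * Real.cos β)
          + (2 * Real.sin (α / 2)) * (Real.cos (α / 2 + β) * ((π - 2 * α) * Real.cos β)) := by
          linear_combination ((π - 2 * α) * Real.cos β) * h1
      _ < Real.sin β * ((π - 2 * α) * Real.cos β)
          + (2 * Real.sin (α / 2)) * ((Real.cos (α / 2) * Real.cos β) * ((π - 2 * α) * Real.cos β)) := by
          have := mul_lt_mul_of_pos_left step1 (show (0:ℝ) < 2 * Real.sin (α / 2) by positivity)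
          linarith
      _ = Real.sin β * ((π - 2 * α) * Real.cos β)
          + (2 * Real.sin (α / 2)) * (Real.cos (α / 2) * ((π - 2 * α) * Real.cos β ^ 2)) := by ring
      _ ≤ Real.sin β * ((π - 2 * α) * Real.cos β)
          + (2 * Real.sin (α / 2)) * (Real.cos (α / 2) * ((π - 2 * β) * Real.cos α)) := by
          have := mul_le_mul_of_nonneg_left step2
            (show (0:ℝ) ≤ 2 * Real.sin (α / 2) by positivity)
          linarith
      _ = Real.sin α * ((π - 2 * β) * Real.cos α) + Real.sin β * ((π - 2 * α) * Real.cos β) := by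
          rw [h2]; ring
  -- assemble
  rw [hA, hB, hC]
  rw [div_add_div _ _ (by positivity : (2 * Real.cos β) ≠ 0)
      (by positivity : (2 * Real.cos α) ≠ 0),
    div_lt_div_iff₀ (by positivity) (by positivity)]
  have H := mul_lt_mul_of_pos_left K (show (0:ℝ) < 8 * R * Real.cos α by positivity)
  ring_nf
  ring_nf at H
  linarith [H]
end

section
/- For a right triangle with right angle at C, the BC-center and the CA-center of the bulging triangle coincide and both equal the midpoint M of the hypotenuse AB; consequently the union of the bulging arcs over BC and CA equals the semicircle with diameter AB containing C, and the whole bulging triangle is contained in the circle centered at M with radius |AM|. -/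
/-!
The circle with diameter `AB` is the locus `⟪x - A, x - B⟫ = 0` (Thales), and its interior the
locus `⟪x - A, x - B⟫ ≤ 0`. Since `C` sees `AB` at a right angle, `C` lies on that circle, so the
midpoint `M` of `AB` is equidistant from `A`, `B`, `C`. With `A = (a, b)` and `B = 0` the circle
reads `x₀ (x₀ - a) + x₁ (x₁ - b) = 0`, and both remaining claims become sign bookkeeping for this
quadratic: on the circle, the side of `AB` is decided by the lines `BC` and `CA`; and on the circle
centred at `P`, `b · ⟪x - A, x - B⟫ = a (b x₀ - a x₁)`, which is `≤ 0` beyond `AB`.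
-/

open scoped InnerProductSpace

section Thales

variable {E : Type*} [NormedAddCommGroup E] [InnerProductSpace ℝ E]

theorem dist_sq_midpoint_sub_dist_sq_midpoint (x A B : E) :
    dist x (midpoint ℝ A B) ^ 2 - dist A (midpoint ℝ A B) ^ 2 = ⟪x - A, x - B⟫_ℝ := by
  have hx : x - midpoint ℝ A B = (2 : ℝ)⁻¹ • ((x - A) + (x - B)) := by
    rw [midpoint_eq_smul_add, invOf_eq_inv]; module
  have hA : A - midpoint ℝ A B = (2 : ℝ)⁻¹ • ((x - B) - (x - A)) := by
    rw [midpoint_eq_smul_add, invOf_eq_inv]; module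
  rw [dist_eq_norm, dist_eq_norm, hx, hA, norm_smul, norm_smul, mul_pow, mul_pow]
  generalize x - A = u, x - B = v
  rw [norm_add_sq_real, norm_sub_sq_real, real_inner_comm v]
  norm_num
  ring

theorem dist_midpoint_eq_iff_inner_eq_zero (x A B : E) :
    dist x (midpoint ℝ A B) = dist A (midpoint ℝ A B) ↔ ⟪x - A, x - B⟫_ℝ = 0 := by
  rw [← dist_sq_midpoint_sub_dist_sq_midpoint, sub_eq_zero, sq_eq_sq₀ dist_nonneg dist_nonneg]

theorem dist_midpoint_le_iff_inner_nonpos (x A B : E) :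
    dist x (midpoint ℝ A B) ≤ dist A (midpoint ℝ A B) ↔ ⟪x - A, x - B⟫_ℝ ≤ 0 := by
  rw [← dist_sq_midpoint_sub_dist_sq_midpoint, sub_nonpos, sq_le_sq₀ dist_nonneg dist_nonneg]

end Thales

theorem EuclideanSpace.dist_sq_fin_two (x y : EuclideanSpace ℝ (Fin 2)) :
    dist x y ^ 2 = (x 0 - y 0) ^ 2 + (x 1 - y 1) ^ 2 := by
  simp [EuclideanSpace.dist_sq_eq, Fin.sum_univ_two, Real.dist_eq, sq_abs]

theorem nonpos_or_le_iff_of_mul_sub_add_mul_sub_eq_zero {a b u v : ℝ} (ha : 0 < a) (hb : 0 < b)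
    (h : u * (u - a) + v * (v - b) = 0) : v ≤ 0 ∨ a ≤ u ↔ 0 ≤ b * u - a * v := by
  constructor
  · rintro (hv | hu)
    · have hu : 0 ≤ u := by nlinarith
      nlinarith
    · have hv : v ≤ b := by nlinarith
      nlinarith
  · contrapose!
    rintro ⟨hv, hu⟩
    rcases le_or_gt u 0 with hu₀ | hu₀
    · nlinarith
    · have hbv : b < v := by nlinarith [mul_pos hu₀ (sub_pos.2 hu)]
      nlinarith

theorem mul_sub_add_mul_sub_nonpos_of_sq_add_sq_eq {a b u v : ℝ} (ha : 0 ≤ a) (hb : 0 < b)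
    (hP : (u - a) ^ 2 + (v - (b ^ 2 - a ^ 2) / (2 * b)) ^ 2 = (b - (b ^ 2 - a ^ 2) / (2 * b)) ^ 2)
    (hside : b * u - a * v ≤ 0) : u * (u - a) + v * (v - b) ≤ 0 := by
  set p := (b ^ 2 - a ^ 2) / (2 * b) with hp
  have hbp : 2 * b * p = b ^ 2 - a ^ 2 := by rw [hp]; field_simp
  have key : b * (u * (u - a) + v * (v - b)) = a * (b * u - a * v) := by
    linear_combination b * hP + (v - b) * hbp
  exact nonpos_of_mul_nonpos_right (key ▸ mul_nonpos_of_nonneg_of_nonpos ha hside) hb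

theorem right_bulging_inscribed_general (a b : ℝ) (ha : 0 < a) (hb : 0 < b) :
    let A : EuclideanSpace ℝ (Fin 2) := !₂[a, b]
    let B : EuclideanSpace ℝ (Fin 2) := !₂[0, 0]
    let C : EuclideanSpace ℝ (Fin 2) := !₂[a, 0]
    let M : EuclideanSpace ℝ (Fin 2) := midpoint ℝ A B
    let P : EuclideanSpace ℝ (Fin 2) := !₂[a, (b ^ 2 - a ^ 2) / (2 * b)]
    -- M is both the BC-center and the CA-center: it lies on side AB and is
    -- equidistant from B and C, and from C and A.
    (M ∈ segment ℝ A B ∧ dist M B = dist M C ∧ dist M C = dist M A ∧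
      dist M A = Real.sqrt (a ^ 2 + b ^ 2) / 2) ∧
    -- the union of the bulging arcs over BC and over CA is the semicircle on the
    -- circle of diameter AB lying on the side of line AB containing C
    ({x : EuclideanSpace ℝ (Fin 2) | dist x M = dist A M ∧ x 1 ≤ 0} ∪
        {x : EuclideanSpace ℝ (Fin 2) | dist x M = dist A M ∧ a ≤ x 0} =
      {x : EuclideanSpace ℝ (Fin 2) | dist x M = dist A M ∧ 0 ≤ b * x 0 - a * x 1}) ∧
    -- the bulging arc over AB (the part of the circle centered at P through A and B
    -- on the far side of line AB from C) lies inside the circumscribed circle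
    {x : EuclideanSpace ℝ (Fin 2) | dist x P = dist A P ∧ b * x 0 - a * x 1 ≤ 0} ⊆
      Metric.closedBall M (dist A M) := by
  intro A B C M P
  have thales (x : EuclideanSpace ℝ (Fin 2)) :
      ⟪x - A, x - B⟫_ℝ = x 0 * (x 0 - a) + x 1 * (x 1 - b) := by
    simp [A, B, PiLp.inner_apply, Fin.sum_univ_two]
  have on_circle (x : EuclideanSpace ℝ (Fin 2)) :
      dist x M = dist A M ↔ x 0 * (x 0 - a) + x 1 * (x 1 - b) = 0 :=
    thales x ▸ dist_midpoint_eq_iff_inner_eq_zero x A B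
  have hC : dist C M = dist A M := by
    rw [on_circle]
    simp [C]
  have hradius : dist A M = Real.sqrt (a ^ 2 + b ^ 2) / 2 := by
    rw [dist_left_midpoint, EuclideanSpace.dist_eq]
    simp [A, B, Fin.sum_univ_two, Real.dist_eq, sq_abs, div_eq_inv_mul]
  refine ⟨⟨midpoint_mem_segment A B, ?_, ?_, ?_⟩, ?_, ?_⟩
  · rw [dist_comm, dist_comm M C, hC, dist_left_midpoint_eq_dist_right_midpoint]
  · rw [dist_comm, hC, dist_comm]
  · rw [dist_comm, hradius]
  · ext x
    simp only [Set.mem_union, Set.mem_ofPred_eq, ← and_or_left, on_circle]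
    exact and_congr_right (nonpos_or_le_iff_of_mul_sub_add_mul_sub_eq_zero ha hb)
  · rintro x ⟨hxP, hside⟩
    rw [Metric.mem_closedBall, dist_midpoint_le_iff_inner_nonpos, thales]
    have hP := congrArg (· ^ 2) hxP
    simp only [EuclideanSpace.dist_sq_fin_two] at hP
    exact mul_sub_add_mul_sub_nonpos_of_sq_add_sq_eq ha.le hb (by simpa [A, P] using hP) hside

theorem right_bulging_inscribed (a b : ℝ) (ha : 0 < a) (hb : 0 < b) (hab : a ≤ b) :
    let A : EuclideanSpace ℝ (Fin 2) := !₂[a, b]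
    let B : EuclideanSpace ℝ (Fin 2) := !₂[0, 0]
    let C : EuclideanSpace ℝ (Fin 2) := !₂[a, 0]
    let M : EuclideanSpace ℝ (Fin 2) := midpoint ℝ A B
    let P : EuclideanSpace ℝ (Fin 2) := !₂[a, (b ^ 2 - a ^ 2) / (2 * b)]
    -- M is both the BC-center and the CA-center: it lies on side AB and is
    -- equidistant from B and C, and from C and A.
    (M ∈ segment ℝ A B ∧ dist M B = dist M C ∧ dist M C = dist M A ∧
      dist M A = Real.sqrt (a ^ 2 + b ^ 2) / 2) ∧
    -- the union of the bulging arcs over BC and over CA is the semicircle on the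
    -- circle of diameter AB lying on the side of line AB containing C
    ({x : EuclideanSpace ℝ (Fin 2) | dist x M = dist A M ∧ x 1 ≤ 0} ∪
        {x : EuclideanSpace ℝ (Fin 2) | dist x M = dist A M ∧ a ≤ x 0} =
      {x : EuclideanSpace ℝ (Fin 2) | dist x M = dist A M ∧ 0 ≤ b * x 0 - a * x 1}) ∧
    -- the bulging arc over AB (the part of the circle centered at P through A and B
    -- on the far side of line AB from C) lies inside the circumscribed circle
    {x : EuclideanSpace ℝ (Fin 2) | dist x P = dist A P ∧ b * x 0 - a * x 1 ≤ 0} ⊆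
      Metric.closedBall M (dist A M) :=
  right_bulging_inscribed_general a b ha hb
end
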